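/- arXiv:1607.08003 — 7 statements merged into one kernel-verified Lean document; each statement's English description precedes it below -/
import Mathlib

section
/- For δ > 0 define g_δ(z) = −1/(i·δ − 1/(z + i·δ)). Then: (a) for every z with Im z ≥ 0 the expressions are well defined (z + iδ ≠ 0 and iδ − 1/(z+iδ) ≠ 0), g_δ(z) has strictly positive imaginary part, and there exists a compact subset K of the open upper half-plane H⁺ (depending on δ) such that g_δ({z : Im z ≥ 0}) ⊆ K; (b) g_δ(z) → z as δ → 0⁺, uniformly in z on every compact subset of H⁺. -/
/-!
With `φ w = -1 / w` we have `g_δ z = φ (iδ + φ (z + iδ))`. The map `φ` preserves the closed and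
the open upper half-plane, and on `{δ ≤ Im w}` it is bounded by `1 / δ`. Hence for `Im z ≥ 0` the
point `iδ + φ (z + iδ)` lies in `{δ ≤ Im w, ‖w‖ ≤ δ + 1 / δ}`, which `φ` sends into the compact set
`{‖w‖ ≤ 1 / δ, δ / (δ + 1 / δ) ^ 2 ≤ Im w}` of the open half-plane.
For the limit, `(δ, z) ↦ g_δ z` is jointly continuous on `[0, ∞) × H⁺` and `g_0 = id`, so the
convergence is uniform on compact subsets.
-/

open Complex Filter Set Topology

namespace Complex

theorem im_neg_one_div (w : ℂ) : (-1 / w).im = w.im / normSq w := by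
  simp [neg_div]

theorem im_neg_one_div_nonneg {w : ℂ} (hw : 0 ≤ w.im) : 0 ≤ (-1 / w).im := by
  rw [im_neg_one_div]
  exact div_nonneg hw (normSq_nonneg w)

theorem im_neg_one_div_pos {w : ℂ} (hw : 0 < w.im) : 0 < (-1 / w).im := by
  rw [im_neg_one_div]
  exact div_pos hw (normSq_pos.2 (ne_of_apply_ne im hw.ne'))

theorem norm_neg_one_div_le {w : ℂ} {δ : ℝ} (hδ : 0 < δ) (hw : δ ≤ w.im) :
    ‖-1 / w‖ ≤ 1 / δ := by
  rw [norm_div, norm_neg, norm_one]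
  exact one_div_le_one_div_of_le hδ (hw.trans (im_le_norm w))

theorem div_sq_le_im_neg_one_div {w : ℂ} {δ R : ℝ} (hδ : 0 < δ) (hw : δ ≤ w.im)
    (hR : ‖w‖ ≤ R) : δ / R ^ 2 ≤ (-1 / w).im := by
  have hw₀ : 0 < ‖w‖ := (hδ.trans_le hw).trans_le (im_le_norm w)
  rw [im_neg_one_div, normSq_eq_norm_sq]
  gcongr
  exact hδ.le.trans hw

end Complex

noncomputable def gDelta (δ : ℝ) (z : ℂ) : ℂ := -1 / (I * δ - 1 / (z + I * δ))

section gDelta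

variable {δ : ℝ} {z u : ℂ}

theorem im_add_I_mul_ofReal (z : ℂ) (δ : ℝ) : (z + I * δ).im = z.im + δ := by
  simp

theorem im_I_mul_ofReal_sub_one_div (δ : ℝ) (u : ℂ) :
    (I * δ - 1 / u).im = δ + (-1 / u).im := by
  rw [sub_eq_add_neg, add_im, ← neg_div]
  simp

theorem le_im_I_mul_ofReal_sub_one_div (hu : 0 ≤ u.im) : δ ≤ (I * δ - 1 / u).im := by
  rw [im_I_mul_ofReal_sub_one_div]
  linarith [im_neg_one_div_nonneg hu]

theorem im_I_mul_ofReal_sub_one_div_pos (hδ : 0 ≤ δ) (hu : 0 < u.im) :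
    0 < (I * δ - 1 / u).im := by
  rw [im_I_mul_ofReal_sub_one_div]
  exact add_pos_of_nonneg_of_pos hδ (im_neg_one_div_pos hu)

theorem norm_I_mul_ofReal_sub_one_div_le (hδ : 0 < δ) (hu : δ ≤ u.im) :
    ‖I * δ - 1 / u‖ ≤ δ + 1 / δ := by
  rw [sub_eq_add_neg, ← neg_div]
  calc ‖I * δ + -1 / u‖ ≤ ‖I * (δ : ℂ)‖ + ‖-1 / u‖ := norm_add_le _ _
    _ ≤ δ + 1 / δ := by
      rw [norm_mul, norm_I, norm_real, Real.norm_of_nonneg hδ.le, one_mul]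
      gcongr
      exact norm_neg_one_div_le hδ hu

theorem norm_gDelta_le (hδ : 0 < δ) (hz : 0 ≤ z.im) : ‖gDelta δ z‖ ≤ 1 / δ :=
  norm_neg_one_div_le hδ (le_im_I_mul_ofReal_sub_one_div (by rw [im_add_I_mul_ofReal]; linarith))

theorem div_sq_le_im_gDelta (hδ : 0 < δ) (hz : 0 ≤ z.im) :
    δ / (δ + 1 / δ) ^ 2 ≤ (gDelta δ z).im := by
  have hu : δ ≤ (z + I * δ).im := by rw [im_add_I_mul_ofReal]; linarith
  exact div_sq_le_im_neg_one_div hδ (le_im_I_mul_ofReal_sub_one_div (hδ.le.trans hu))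
    (norm_I_mul_ofReal_sub_one_div_le hδ hu)

theorem gDelta_zero : gDelta 0 = id := by
  funext z
  simp [gDelta]

theorem continuousOn_gDelta :
    ContinuousOn (Function.uncurry gDelta) (Ici 0 ×ˢ {z | 0 < z.im}) := by
  rintro ⟨δ, z⟩ ⟨hδ : 0 ≤ δ, hz : 0 < z.im⟩
  have hu : 0 < (z + I * δ).im := by
    rw [im_add_I_mul_ofReal]
    exact add_pos_of_pos_of_nonneg hz hδ
  have hw := im_I_mul_ofReal_sub_one_div_pos hδ hu
  have hu₀ : z + I * δ ≠ 0 := ne_of_apply_ne im hu.ne'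
  have hw₀ : I * δ - 1 / (z + I * δ) ≠ 0 := ne_of_apply_ne im hw.ne'
  apply ContinuousAt.continuousWithinAt
  unfold Function.uncurry gDelta
  fun_prop (disch := first | exact hu₀ | exact hw₀)

end gDelta

theorem ContinuousOn.tendstoUniformlyOn_nhdsWithin {α β E : Type*} [TopologicalSpace α]
    [TopologicalSpace β] [UniformSpace E] {f : α → β → E} {s : Set α} {k : Set β} {q : α}
    (hk : IsCompact k) (hf : ContinuousOn (Function.uncurry f) (s ×ˢ k)) (hq : q ∈ s) :
    TendstoUniformlyOn f (f q) (𝓝[s] q) k := fun u hu => by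
  obtain ⟨v, hv, hvu⟩ := hk.mem_uniformity_of_prod hf hq (tendsto_swap_uniformity hu)
  exact mem_of_superset hv fun p hp x hx => hvu p hp x hx

theorem tendstoUniformlyOn_gDelta {K : Set ℂ} (hK : IsCompact K) (hKH : K ⊆ {z | 0 < z.im}) :
    TendstoUniformlyOn gDelta id (𝓝[>] 0) K := by
  have h := (continuousOn_gDelta.mono (prod_mono subset_rfl hKH)).tendstoUniformlyOn_nhdsWithin
    hK self_mem_Ici
  rw [gDelta_zero] at h
  exact fun u hu => (h u hu).filter_mono (nhdsWithin_mono _ Ioi_subset_Ici_self)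

/-- For `δ > 0` define `g_δ(z) = -1/(iδ - 1/(z + iδ))`. Then:
(a) for every `z` with `Im z ≥ 0` the expression is well defined, has strictly positive
imaginary part, and `g_δ` maps the closed upper half-plane into some compact subset of the
open upper half-plane;
(b) `g_δ(z) → z` as `δ → 0⁺`, uniformly in `z` on every compact subset of the open upper
half-plane. -/
theorem g_delta_maps_into_compact_and_tendsto_id :
    (∀ δ : ℝ, 0 < δ →
      (∀ z : ℂ, 0 ≤ z.im →
        z + Complex.I * (δ : ℂ) ≠ 0 ∧
        Complex.I * (δ : ℂ) - 1 / (z + Complex.I * (δ : ℂ)) ≠ 0 ∧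
        0 < (-1 / (Complex.I * (δ : ℂ) - 1 / (z + Complex.I * (δ : ℂ)))).im) ∧
      ∃ K : Set ℂ, IsCompact K ∧ K ⊆ {z : ℂ | 0 < z.im} ∧
        (fun z : ℂ => -1 / (Complex.I * (δ : ℂ) - 1 / (z + Complex.I * (δ : ℂ)))) ''
          {z : ℂ | 0 ≤ z.im} ⊆ K) ∧
    (∀ K : Set ℂ, IsCompact K → K ⊆ {z : ℂ | 0 < z.im} →
      TendstoUniformlyOn
        (fun (δ : ℝ) (z : ℂ) => -1 / (Complex.I * (δ : ℂ) - 1 / (z + Complex.I * (δ : ℂ))))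
        (fun z : ℂ => z) (nhdsWithin 0 (Set.Ioi (0 : ℝ))) K) := by
  refine ⟨fun δ hδ => ?_, fun K hK hKH => tendstoUniformlyOn_gDelta hK hKH⟩
  have hc : 0 < δ / (δ + 1 / δ) ^ 2 := by positivity
  refine ⟨fun z hz => ?_, ?_⟩
  · have hu : 0 < (z + I * δ).im := by rw [im_add_I_mul_ofReal]; linarith
    have hw := im_I_mul_ofReal_sub_one_div_pos hδ.le hu
    exact ⟨ne_of_apply_ne im hu.ne', ne_of_apply_ne im hw.ne',
      hc.trans_le (div_sq_le_im_gDelta hδ hz)⟩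
  · refine ⟨Metric.closedBall 0 (1 / δ) ∩ {w | δ / (δ + 1 / δ) ^ 2 ≤ w.im},
      (isCompact_closedBall 0 _).inter_right (isClosed_le continuous_const continuous_im),
      fun w hw => hc.trans_le hw.2, ?_⟩
    rintro _ ⟨z, hz, rfl⟩
    exact ⟨mem_closedBall_zero_iff.2 (norm_gDelta_le hδ hz), div_sq_le_im_gDelta hδ hz⟩
end

section
/- Let φ be a Pick function, i.e. φ is holomorphic on the open upper half-plane H⁺ and φ(H⁺) ⊆ H⁺. Then for every ε > 0 and every compact set Ω ⊂ H⁺ there exists a function ψ, holomorphic on H⁺, such that: (i) ψ extends to a continuous function on the closed upper half-plane {z : Im z ≥ 0}; (ii) the closure of ψ(H⁺) is a compact subset of H⁺; and (iii) |φ(z) − ψ(z)| < ε for all z ∈ Ω. -/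
/-!
Let `C z = (z - i) / (z + i)` be the Cayley transform of the upper half-plane onto the unit disc.
Conjugating the contraction `w ↦ r w` (`0 < r < 1`) by `C` gives a holomorphic self-map `M` of
the upper half-plane that sends its closure into a compact subset of it, and `M → id` uniformly
on bounded sets as `r → 1`. Hence `M ∘ φ ∘ M` lies in `P_b`, and it converges to `φ` uniformly
on compact subsets, since `φ` is uniformly continuous near such a set.
-/

open Complex Filter Topology Metric Set

lemma setOf_im_pos_subset_setOf_im_nonneg : {z : ℂ | 0 < z.im} ⊆ {z | 0 ≤ z.im} :=
  ofPred_subset_ofPred.2 fun _ => le_of_lt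

/-- `C⁻¹ (r • C z)` with `s = (1 - r) / (1 + r)`, where `C` is the Cayley transform. -/
noncomputable def halfPlaneShrink (s : ℝ) (z : ℂ) : ℂ := (z + s * I) / (1 - s * I * z)

namespace halfPlaneShrink

variable {s : ℝ} {z : ℂ}

lemma re_denom (s : ℝ) (z : ℂ) : (1 - s * I * z).re = 1 + s * z.im := by
  simp

lemma im_denom (s : ℝ) (z : ℂ) : (1 - s * I * z).im = -(s * z.re) := by
  simp

lemma normSq_denom (s : ℝ) (z : ℂ) :
    normSq (1 - s * I * z) = 1 + 2 * s * z.im + s ^ 2 * normSq z := by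
  rw [normSq_apply, normSq_apply, re_denom, im_denom]
  ring

lemma re_num (s : ℝ) (z : ℂ) : (z + s * I).re = z.re := by
  simp

lemma im_num (s : ℝ) (z : ℂ) : (z + s * I).im = z.im + s := by
  simp

lemma one_le_norm_denom (hs : 0 ≤ s) (hz : 0 ≤ z.im) : 1 ≤ ‖1 - s * I * z‖ :=
  calc (1 : ℝ) ≤ 1 + s * z.im := by nlinarith
    _ = (1 - s * I * z).re := (re_denom s z).symm
    _ ≤ ‖1 - s * I * z‖ := re_le_norm _

lemma denom_ne_zero (hs : 0 ≤ s) (hz : 0 ≤ z.im) : 1 - s * I * z ≠ 0 :=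
  norm_pos_iff.1 (one_pos.trans_le (one_le_norm_denom hs hz))

lemma sub_self_eq (hs : 0 ≤ s) (hz : 0 ≤ z.im) :
    halfPlaneShrink s z - z = s * I * (1 + z ^ 2) / (1 - s * I * z) := by
  rw [halfPlaneShrink, div_sub' (denom_ne_zero hs hz)]
  ring

lemma norm_sub_self_le (hs : 0 ≤ s) (hz : 0 ≤ z.im) :
    ‖halfPlaneShrink s z - z‖ ≤ s * (1 + ‖z‖ ^ 2) := by
  rw [sub_self_eq hs hz, norm_div]
  refine div_le_of_le_mul₀ (norm_nonneg _) (by positivity) ?_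
  calc ‖(s : ℂ) * I * (1 + z ^ 2)‖ = s * ‖1 + z ^ 2‖ := by
        simp [abs_of_nonneg hs]
    _ ≤ s * (1 + ‖z‖ ^ 2) := by
        gcongr; exact (norm_add_le _ _).trans (by simp)
    _ ≤ s * (1 + ‖z‖ ^ 2) * ‖1 - s * I * z‖ :=
        le_mul_of_one_le_right (by positivity) (one_le_norm_denom hs hz)

lemma le_im (hs₀ : 0 ≤ s) (hs₁ : s ≤ 1) (hz : 0 ≤ z.im) : s ≤ (halfPlaneShrink s z).im := by
  have hD := normSq_pos.2 (denom_ne_zero hs₀ hz)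
  rw [halfPlaneShrink, div_im, ← sub_div, le_div_iff₀ hD, normSq_denom, normSq_apply, re_num,
    im_num, re_denom, im_denom]
  nlinarith [mul_nonneg (mul_nonneg hs₀ (sub_nonneg.2 hs₁))
      (add_nonneg (mul_self_nonneg z.re) (mul_self_nonneg z.im)),
    mul_nonneg hs₀ hz, mul_nonneg (sub_nonneg.2 hs₁) hz]

lemma norm_le (hs₀ : 0 < s) (hs₁ : s ≤ 1) (hz : 0 ≤ z.im) : ‖halfPlaneShrink s z‖ ≤ s⁻¹ := by
  rw [halfPlaneShrink, norm_div, div_le_iff₀ (one_pos.trans_le (one_le_norm_denom hs₀.le hz)),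
    ← div_eq_inv_mul, le_div_iff₀ hs₀, ← sq_le_sq₀ (by positivity) (by positivity), mul_pow,
    ← normSq_eq_norm_sq, ← normSq_eq_norm_sq, normSq_denom, normSq_apply, normSq_apply, re_num,
    im_num]
  have hs₂ : s ^ 2 ≤ 1 := pow_le_one₀ hs₀.le hs₁
  nlinarith [mul_nonneg (mul_nonneg hs₀.le hz) (sub_nonneg.2 hs₂),
    pow_le_one₀ (n := 2) (sq_nonneg s) hs₂]

lemma differentiableAt (hs : 0 ≤ s) (hz : 0 ≤ z.im) :
    DifferentiableAt ℂ (halfPlaneShrink s) z := by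
  have := denom_ne_zero hs hz
  unfold halfPlaneShrink
  fun_prop (disch := assumption)

lemma mapsTo_closedBall_inter (hs₀ : 0 < s) (hs₁ : s ≤ 1) :
    MapsTo (halfPlaneShrink s) {z | 0 ≤ z.im} (closedBall 0 s⁻¹ ∩ {w | s ≤ w.im}) :=
  fun _ hz => ⟨mem_closedBall_zero_iff.2 (norm_le hs₀ hs₁ hz), le_im hs₀.le hs₁ hz⟩

lemma norm_sub_self_le_of_norm_le {C : ℝ} (hs : 0 ≤ s) (hz : 0 ≤ z.im) (hzC : ‖z‖ ≤ C) :
    ‖halfPlaneShrink s z - z‖ ≤ s * (1 + C ^ 2) := by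
  refine (norm_sub_self_le hs hz).trans ?_
  gcongr

end halfPlaneShrink

/-- The class `P_b` of the paper. -/
def IsBoundedPick (ψ : ℂ → ℂ) : Prop :=
  DifferentiableOn ℂ ψ {z : ℂ | 0 < z.im} ∧
    ContinuousOn ψ {z : ℂ | 0 ≤ z.im} ∧
    IsCompact (closure (ψ '' {z : ℂ | 0 < z.im})) ∧
    closure (ψ '' {z : ℂ | 0 < z.im}) ⊆ {z : ℂ | 0 < z.im}

open halfPlaneShrink in
theorem isBoundedPick_halfPlaneShrink_comp {f : ℂ → ℂ}
    (hf : DifferentiableOn ℂ f {z | 0 < z.im})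
    (hmap : MapsTo f {z | 0 < z.im} {z | 0 < z.im}) {s : ℝ} (hs₀ : 0 < s) (hs₁ : s ≤ 1) :
    IsBoundedPick (halfPlaneShrink s ∘ f ∘ halfPlaneShrink s) := by
  set K := closedBall (0 : ℂ) s⁻¹ ∩ {w | s ≤ w.im}
  have hK : IsCompact K :=
    (isCompact_closedBall 0 s⁻¹).inter_right (isClosed_le continuous_const continuous_im)
  have hKH : K ⊆ {z | 0 < z.im} := fun w hw => hs₀.trans_le hw.2
  have hM : DifferentiableOn ℂ (halfPlaneShrink s) {z | 0 ≤ z.im} :=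
    fun z hz => (differentiableAt hs₀.le hz).differentiableWithinAt
  have hMK : MapsTo (halfPlaneShrink s) {z | 0 ≤ z.im} K := mapsTo_closedBall_inter hs₀ hs₁
  have hMH : MapsTo (halfPlaneShrink s) {z | 0 ≤ z.im} {z | 0 < z.im} := hMK.mono_right hKH
  have hH := setOf_im_pos_subset_setOf_im_nonneg
  have hinner : MapsTo (f ∘ halfPlaneShrink s) {z | 0 ≤ z.im} {z | 0 < z.im} := hmap.comp hMH
  have himage : closure ((halfPlaneShrink s ∘ f ∘ halfPlaneShrink s) '' {z | 0 < z.im}) ⊆ K :=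
    closure_minimal (image_subset_iff.2 fun z hz => hMK (hH (hinner (hH hz)))) hK.isClosed
  refine ⟨?_, ?_, hK.of_isClosed_subset isClosed_closure himage, himage.trans hKH⟩
  · exact hM.comp (hf.comp (hM.mono hH) (hMH.mono_left hH))
      ((hinner.mono_left hH).mono_right hH)
  · exact hM.continuousOn.comp (hf.continuousOn.comp hM.continuousOn hMH) (hinner.mono_right hH)

open halfPlaneShrink in
theorem TendstoUniformlyOn.halfPlaneShrink_comp {α : Type*} {F : ℝ → α → ℂ} {g : α → ℂ}
    {S : Set α} (hF : TendstoUniformlyOn F g (𝓝[>] 0) S) (hg : Bornology.IsBounded (g '' S))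
    (him : ∀ᶠ s in 𝓝[>] 0, ∀ z ∈ S, 0 ≤ (F s z).im) :
    TendstoUniformlyOn (fun s z => halfPlaneShrink s (F s z)) g (𝓝[>] 0) S := by
  obtain ⟨C, hC⟩ := hg.exists_norm_le
  rw [Metric.tendstoUniformlyOn_iff] at hF ⊢
  intro ε hε
  have hsmall : ∀ᶠ s in 𝓝[>] (0 : ℝ), s * (1 + (C + 1) ^ 2) < ε / 2 :=
    (((continuous_id.mul continuous_const).tendsto' 0 0 (zero_mul _)).mono_left
      nhdsWithin_le_nhds).eventually_lt_const (half_pos hε)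
  filter_upwards [hF (min (ε / 2) 1) (by positivity), him, hsmall, self_mem_nhdsWithin]
    with s hFs hims hs (hs₀ : 0 < s) z hz
  have hclose := lt_min_iff.1 (hFs z hz)
  have hFz : ‖F s z‖ ≤ C + 1 := by
    have := norm_le_norm_add_norm_sub' (F s z) (g z)
    rw [← dist_eq_norm, dist_comm] at this
    linarith [hC _ (mem_image_of_mem g hz)]
  calc dist (g z) (halfPlaneShrink s (F s z))
      ≤ dist (g z) (F s z) + ‖halfPlaneShrink s (F s z) - F s z‖ := by
        rw [← dist_eq_norm, dist_comm (halfPlaneShrink s _)]; exact dist_triangle _ _ _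
    _ < ε / 2 + ε / 2 :=
        add_lt_add_of_lt_of_le hclose.1
          ((norm_sub_self_le_of_norm_le hs₀.le (hims z hz) hFz).trans hs.le)
    _ = ε := add_halves ε

theorem tendstoUniformlyOn_halfPlaneShrink {S : Set ℂ} (hS : Bornology.IsBounded S)
    (hSH : S ⊆ {z | 0 ≤ z.im}) :
    TendstoUniformlyOn halfPlaneShrink id (𝓝[>] 0) S :=
  TendstoUniformlyOn.halfPlaneShrink_comp (F := fun _ => id)
    (Metric.tendstoUniformlyOn_iff.2 fun ε hε => .of_forall fun _ z _ => by simpa using hε)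
    (by simpa using hS) (.of_forall fun _ _ hz => hSH hz)

theorem tendstoUniformlyOn_halfPlaneShrink_comp_comp {f : ℂ → ℂ}
    (hf : ContinuousOn f {z | 0 < z.im}) (hmap : MapsTo f {z | 0 < z.im} {z | 0 < z.im})
    {K : Set ℂ} (hK : IsCompact K) (hKH : K ⊆ {z | 0 < z.im}) :
    TendstoUniformlyOn (fun s => halfPlaneShrink s ∘ f ∘ halfPlaneShrink s) f (𝓝[>] 0) K := by
  obtain ⟨δ, hδ, hKδ⟩ :=
    hK.exists_cthickening_subset_open (isOpen_lt continuous_const continuous_im) hKH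
  have hid := tendstoUniformlyOn_halfPlaneShrink hK.isBounded
    (hKH.trans setOf_im_pos_subset_setOf_im_nonneg)
  have hnear : ∀ᶠ s in 𝓝[>] 0, ∀ z ∈ K, halfPlaneShrink s z ∈ cthickening δ K :=
    (Metric.tendstoUniformlyOn_iff.1 hid δ hδ).mono fun _ hs z hz =>
      mem_cthickening_of_dist_le _ z δ K hz (by rw [dist_comm]; exact (hs z hz).le)
  have hfδ := hK.cthickening.uniformContinuousOn_of_continuous (hf.mono hKδ)
  have hfM : TendstoUniformlyOn (fun s z => f (halfPlaneShrink s z)) f (𝓝[>] 0) K :=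
    hfδ.comp_tendstoUniformlyOn_eventually hnear (fun z hz => self_subset_cthickening K hz) hid
  exact hfM.halfPlaneShrink_comp (hK.image_of_continuousOn (hf.mono hKH)).isBounded
    (hnear.mono fun _ hs z hz => (hmap (hKδ (hs z hz))).le)

/-- The class `P_b` is dense in the class of Pick functions: for every Pick function `φ`
(holomorphic self-map of the open upper half-plane `H⁺`), every `ε > 0` and every compact
`Ω ⊆ H⁺`, there is `ψ` holomorphic on `H⁺`, continuous on the closed half-plane, with
closure of `ψ(H⁺)` a compact subset of `H⁺`, such that `|φ - ψ| < ε` on `Ω`. -/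
theorem pick_bounded_dense
    (φ : ℂ → ℂ)
    (hφ : DifferentiableOn ℂ φ {z : ℂ | 0 < z.im})
    (hmap : Set.MapsTo φ {z : ℂ | 0 < z.im} {z : ℂ | 0 < z.im})
    (ε : ℝ) (hε : 0 < ε)
    (Ω : Set ℂ) (hΩc : IsCompact Ω) (hΩ : Ω ⊆ {z : ℂ | 0 < z.im}) :
    ∃ ψ : ℂ → ℂ,
      DifferentiableOn ℂ ψ {z : ℂ | 0 < z.im} ∧
      ContinuousOn ψ {z : ℂ | 0 ≤ z.im} ∧
      IsCompact (closure (ψ '' {z : ℂ | 0 < z.im})) ∧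
      closure (ψ '' {z : ℂ | 0 < z.im}) ⊆ {z : ℂ | 0 < z.im} ∧
      ∀ z ∈ Ω, ‖φ z - ψ z‖ < ε := by
  have hconv := tendstoUniformlyOn_halfPlaneShrink_comp_comp hφ.continuousOn hmap hΩc hΩ
  obtain ⟨s, hclose, hs₀, hs₁⟩ :=
    ((Metric.tendstoUniformlyOn_iff.1 hconv ε hε).and (Ioc_mem_nhdsGT one_pos)).exists
  obtain ⟨hdiff, hcont, hcpt, hsub⟩ := isBoundedPick_halfPlaneShrink_comp hφ hmap hs₀ hs₁
  exact ⟨_, hdiff, hcont, hcpt, hsub, fun z hz => by simpa [dist_eq_norm] using hclose z hz⟩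
end

section
/- Let F and W be complex numbers with F ≠ 0 and |W| < 1. Then W·F − conj(F) ≠ 0, F − conj(W)·conj(F) ≠ 0, and the following identity holds: (1 − |W|²)/|W·F − conj(F)|² = 1/(F·conj(F)) + W/(conj(F)·(conj(F) − W·F)) + conj(W)/(F·(F − conj(W)·conj(F))), where both sides are complex numbers (the left-hand side being real and positive). -/
open Complex ComplexConjugate

/-! The identity is a partial-fraction decomposition: writing `a = F`, `b = conj F`, `v = conj W`,
one has `|W F - conj F|² = (b - W a)(a - v b)`, and the right-hand side is the decomposition of
`(1 - W v) / ((b - W a)(a - v b))` in the field `ℂ`. The denominators cannot vanish because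
`|W F| = |conj F|` would force `|W| = 1`. -/

theorem one_sub_mul_div_eq_partial_fractions {K : Type*} [Field K] {a b w v : K} (ha : a ≠ 0)
    (hb : b ≠ 0) (hwa : b - w * a ≠ 0) (hvb : a - v * b ≠ 0) :
    (1 - w * v) / ((b - w * a) * (a - v * b)) =
      1 / (a * b) + w / (b * (b - w * a)) + v / (a * (a - v * b)) := by
  field_simp
  ring

section RCLike

variable {K : Type*} [RCLike K]

open RCLike

theorem RCLike.mul_sub_conj_ne_zero {F W : K} (hF : F ≠ 0) (hW : ‖W‖ ≠ 1) :
    W * F - conj F ≠ 0 := by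
  intro h
  have hnorm : ‖W‖ * ‖F‖ = 1 * ‖F‖ := by
    rw [← norm_mul, sub_eq_zero.mp h, norm_conj, one_mul]
  exact hW (mul_right_cancel₀ (norm_ne_zero_iff.mpr hF) hnorm)

theorem RCLike.conj_sub_mul (F W : K) : conj (conj F - W * F) = F - conj W * conj F := by
  simp only [map_sub, map_mul, conj_conj]

end RCLike

/-- The key algebraic identity (2.8) of the paper: for complex `F ≠ 0` and `|W| < 1`,
the denominators are nonzero and
`(1 - |W|²)/|W·F - conj F|² = 1/(F·conj F) + W/(conj F·(conj F - W·F))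
  + conj W/(F·(F - conj W·conj F))`. -/
theorem main_identity (F W : ℂ) (hF : F ≠ 0) (hW : ‖W‖ < 1) :
    W * F - (starRingEnd ℂ) F ≠ 0 ∧
    F - (starRingEnd ℂ) W * (starRingEnd ℂ) F ≠ 0 ∧
    (((1 - ‖W‖ ^ 2) / ‖W * F - (starRingEnd ℂ) F‖ ^ 2 : ℝ) : ℂ) =
      1 / (F * (starRingEnd ℂ) F)
      + W / ((starRingEnd ℂ) F * ((starRingEnd ℂ) F - W * F))
      + (starRingEnd ℂ) W / (F * (F - (starRingEnd ℂ) W * (starRingEnd ℂ) F)) := by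
  have hWF : W * F - conj F ≠ 0 := RCLike.mul_sub_conj_ne_zero hF hW.ne
  have hFW : conj F - W * F ≠ 0 := sub_ne_zero.mpr (sub_ne_zero.mp hWF).symm
  have hconj : F - conj W * conj F ≠ 0 := by
    rw [← RCLike.conj_sub_mul]
    exact (map_ne_zero _).mpr hFW
  refine ⟨hWF, hconj, ?_⟩
  rw [norm_sub_rev, ofReal_div, ofReal_sub, ofReal_one, ofReal_pow, ofReal_pow, ← mul_conj',
    ← mul_conj', RCLike.conj_sub_mul]
  exact one_sub_mul_div_eq_partial_fractions hF ((map_ne_zero _).mpr hF) hFW hconj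
end

section
/- Let f be an entire function such that: (M1) f(z) ≠ 0 whenever Im z ≤ 0; (M3) for every m ∈ ℕ, z^m/f(z) → 0 as |z| → ∞ uniformly on {z : Im z ≤ 0} (i.e. for every ε > 0 there is R > 0 such that |z|^m ≤ ε|f(z)| whenever Im z ≤ 0 and |z| ≥ R). Let φ : ℝ → ℂ be continuous with the closure of φ(ℝ) a compact subset of the open upper half-plane. Define b(x) = (f(x) + conj(f(x)))/2 and d(x) = i(f(x) − conj(f(x)))/2 for real x (so b, d are real-valued and f = b − i·d on ℝ), and μ(x;φ) = (Im φ(x)/π)/|d(x) − φ(x)·b(x)|². Then d(x) − φ(x)b(x) ≠ 0 for all x ∈ ℝ, and for every n ∈ ℕ the function x ↦ x^n·μ(x;φ) is (absolutely) integrable on ℝ. -/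
/-!
On the real line `d = -Im f` and `b = Re f`, so `d - φ b = -(Im f + φ · Re f)`. As `Im φ ≥ v₀ > 0`
and `‖φ‖ ≤ M`, the imaginary part of `Im f + φ · Re f` controls `Re f`, and then the number itself
controls `Im f`; hence `‖f‖ ≤ C ‖d - φ b‖` on `ℝ`. So `d - φ b` has no real zeros by (M1), and by
(M3) with `m = n + 1` the continuous function `x ^ n μ(x;φ)` is `O(x⁻²)` at infinity.
-/

open Complex MeasureTheory Filter ComplexConjugate

namespace Complex

theorem I_mul_sub_conj_div_two (w : ℂ) : I * (w - conj w) / 2 = -(w.im : ℂ) := by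
  rw [sub_conj]
  push_cast
  ring_nf
  rw [I_sq]
  ring

theorem norm_le_mul_norm_im_add_mul_re {p w : ℂ} {v₀ M : ℝ} (hv₀ : 0 < v₀) (hp : v₀ ≤ p.im)
    (hM : ‖p‖ ≤ M) : ‖w‖ ≤ (1 + M + v₀) / v₀ * ‖(w.im : ℂ) + p * w.re‖ := by
  set D : ℂ := (w.im : ℂ) + p * w.re
  have hre : v₀ * |w.re| ≤ ‖D‖ := by
    have hDim : D.im = p.im * w.re := by simp [D]
    calc v₀ * |w.re| ≤ p.im * |w.re| := by gcongr
      _ = |D.im| := by rw [hDim, abs_mul, abs_of_pos (hv₀.trans_le hp)]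
      _ ≤ ‖D‖ := abs_im_le_norm D
  have him : |w.im| ≤ ‖D‖ + M * |w.re| := by
    have : (w.im : ℂ) = D - p * w.re := by simp [D]
    calc |w.im| = ‖D - p * w.re‖ := by rw [← this, norm_real, Real.norm_eq_abs]
      _ ≤ ‖D‖ + ‖p‖ * |w.re| := by
        grw [norm_sub_le, norm_mul, norm_real, Real.norm_eq_abs]
      _ ≤ ‖D‖ + M * |w.re| := by gcongr
  have hM0 : 0 ≤ M := (norm_nonneg p).trans hM
  rw [div_mul_eq_mul_div, le_div_iff₀ hv₀]
  calc ‖w‖ * v₀ ≤ (|w.re| + |w.im|) * v₀ := by gcongr; exact norm_le_abs_re_add_abs_im w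
    _ ≤ (1 + M + v₀) * ‖D‖ := by nlinarith

end Complex

theorem integrable_pow_mul_div_norm_sq {E : Type*} [NormedAddCommGroup E] {u : ℝ → ℝ}
    {g : ℝ → E} {K C : ℝ} (n : ℕ) (hu : Continuous u) (hg : Continuous g) (hg0 : ∀ x, g x ≠ 0)
    (huK : ∀ x, |u x| ≤ K) (hgrowth : ∀ᶠ x in cocompact ℝ, |x| ^ (n + 1) ≤ C * ‖g x‖) :
    Integrable fun x => x ^ n * (u x / ‖g x‖ ^ 2) := by
  have hcont : Continuous fun x => x ^ n * (u x / ‖g x‖ ^ 2) :=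
    (continuous_pow n).mul (hu.div (hg.norm.pow 2) fun x => by simp [hg0 x])
  refine hcont.locallyIntegrable.integrable_of_isBigO_cocompact ?_
    (integrable_inv_one_add_sq.integrableAtFilter _)
  refine Asymptotics.IsBigO.of_bound (2 * K * C ^ 2) ?_
  have hone : ∀ᶠ x : ℝ in cocompact ℝ, 1 ≤ |x| :=
    tendsto_norm_cocompact_atTop.eventually_ge_atTop 1
  filter_upwards [hgrowth, hone] with x hx hx1
  have hgx : 0 < ‖g x‖ ^ 2 := by simp [hg0 x]
  have hpow : |x| ^ n * (1 + x ^ 2) ≤ 2 * (|x| ^ (n + 1)) ^ 2 := by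
    have h1 : 1 ≤ |x| ^ n := one_le_pow₀ hx1
    have h2 : 1 ≤ x ^ 2 := by nlinarith [sq_abs x]
    have h3 : (|x| ^ (n + 1)) ^ 2 = |x| ^ n * |x| ^ n * x ^ 2 := by rw [← sq_abs x]; ring
    rw [h3]
    nlinarith
  rw [norm_inv, Real.norm_of_nonneg (by positivity : (0 : ℝ) ≤ 1 + x ^ 2), norm_mul, norm_div,
    norm_pow, norm_pow, norm_norm, Real.norm_eq_abs, Real.norm_eq_abs, ← div_eq_mul_inv,
    mul_div_assoc', div_le_div_iff₀ hgx (by positivity)]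
  calc |x| ^ n * |u x| * (1 + x ^ 2) = |u x| * (|x| ^ n * (1 + x ^ 2)) := by ring
    _ ≤ K * (2 * (C * ‖g x‖) ^ 2) := by
      have hK : 0 ≤ K := (abs_nonneg _).trans (huK x)
      exact mul_le_mul (huK x) (hpow.trans (by gcongr)) (by positivity) hK
    _ = 2 * K * C ^ 2 * ‖g x‖ ^ 2 := by ring

/-- First assertion of Theorem 1: for an entire function `f` with no zeros in the closed
lower half-plane (M1) and super-polynomial growth there (M3), and a continuous `φ : ℝ → ℂ`
whose range has compact closure inside the open upper half-plane, the density
`μ(x;φ) = (Im φ(x)/π)/|d(x) - φ(x)·b(x)|²` (where `b = (f + conj f)/2`,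
`d = i(f - conj f)/2` on ℝ) is well defined and all its moments are finite. -/
theorem moments_finite
    (f : ℂ → ℂ) (hf : Differentiable ℂ f)
    (hM1 : ∀ z : ℂ, z.im ≤ 0 → f z ≠ 0)
    (hM3 : ∀ m : ℕ, ∀ ε : ℝ, 0 < ε → ∃ R : ℝ, 0 < R ∧ ∀ z : ℂ, z.im ≤ 0 →
      R ≤ ‖z‖ → ‖z‖ ^ m ≤ ε * ‖f z‖)
    (φ : ℝ → ℂ) (hφc : Continuous φ)
    (hφcpt : IsCompact (closure (Set.range φ)))
    (hφim : closure (Set.range φ) ⊆ {z : ℂ | 0 < z.im}) :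
    (∀ x : ℝ,
      Complex.I * (f (x : ℂ) - (starRingEnd ℂ) (f (x : ℂ))) / 2 -
        φ x * ((f (x : ℂ) + (starRingEnd ℂ) (f (x : ℂ))) / 2) ≠ 0) ∧
    ∀ n : ℕ, Integrable (fun x : ℝ =>
      x ^ n * (((φ x).im / Real.pi) /
        ‖Complex.I * (f (x : ℂ) - (starRingEnd ℂ) (f (x : ℂ))) / 2 -
          φ x * ((f (x : ℂ) + (starRingEnd ℂ) (f (x : ℂ))) / 2)‖ ^ 2)) := by
  set g : ℝ → ℂ := fun x => I * (f x - conj (f x)) / 2 - φ x * ((f x + conj (f x)) / 2)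
  obtain ⟨v₀, hv₀, hv₀le⟩ := hφcpt.exists_forall_le' continuous_im.continuousOn hφim
  obtain ⟨M, hM⟩ := hφcpt.isBounded.exists_norm_le
  have hφK (x : ℝ) : φ x ∈ closure (Set.range φ) := subset_closure ⟨x, rfl⟩
  have hfg (x : ℝ) : ‖f x‖ ≤ (1 + M + v₀) / v₀ * ‖g x‖ := by
    dsimp only [g]
    rw [I_mul_sub_conj_div_two, ← re_eq_add_conj, ← neg_add', norm_neg]
    exact norm_le_mul_norm_im_add_mul_re hv₀ (hv₀le _ (hφK x)) (hM _ (hφK x))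
  have hg0 (x : ℝ) : g x ≠ 0 := fun h ↦
    hM1 x (by simp) (norm_le_zero_iff.1 (by simpa [h] using hfg x))
  refine ⟨hg0, fun n ↦ ?_⟩
  obtain ⟨R, -, hR⟩ := hM3 (n + 1) 1 one_pos
  have hgrowth : ∀ᶠ x : ℝ in cocompact ℝ, |x| ^ (n + 1) ≤ (1 + M + v₀) / v₀ * ‖g x‖ := by
    filter_upwards [tendsto_norm_cocompact_atTop.eventually_ge_atTop R] with x hx
    have hfx : |x| ^ (n + 1) ≤ ‖f x‖ := by simpa using hR x (by simp) (by simpa using hx)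
    exact hfx.trans (hfg x)
  have hfc : Continuous fun x : ℝ ↦ f x := hf.continuous.comp continuous_ofReal
  have hfc' := continuous_conj.comp hfc
  have hgc : Continuous g :=
    ((continuous_const.mul (hfc.sub hfc')).div_const 2).sub (hφc.mul ((hfc.add hfc').div_const 2))
  refine integrable_pow_mul_div_norm_sq (K := M / Real.pi) n (by fun_prop) hgc hg0
    (fun x ↦ ?_) hgrowth
  rw [abs_div, abs_of_pos Real.pi_pos]
  gcongr
  exact (abs_im_le_norm _).trans (hM _ (hφK x))
end

section
/- Let f be an entire function such that: (M1) f(z) ≠ 0 whenever Im z ≤ 0; (M2) |f(z)| ≤ |f̄(z)| whenever Im z ≥ 0, where f̄(z) := conj(f(conj z)); (M3) for every m ∈ ℕ, z^m/f(z) → 0 as |z| → ∞ uniformly on {z : Im z ≤ 0}. Let δ ∈ (0,1) and let w be continuous on the closed upper half-plane {z : Im z ≥ 0}, holomorphic on the open upper half-plane, with |w(z)| ≤ δ for all z with Im z ≥ 0. Then for every n ∈ ℕ the function x ↦ x^n·w(x)/(f̄(x)·(f̄(x) − w(x)·f(x))) is integrable on ℝ and ∫_ℝ x^n·w(x)/(f̄(x)·(f̄(x)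 − w(x)·f(x))) dx = 0. -/
/-!
The integrand `F z = z ^ n * w z / (f̄ z * (f̄ z - w z * f z))` is continuous on the closed upper
half-plane and holomorphic in the open one: there `f̄` has no zeros by (M1), and
`‖f̄ - w f‖ ≥ (1 - δ) ‖f̄‖` by (M2). Applying (M3) at `conj z` gives `‖f̄ z‖ ≥ ‖z‖ ^ (n + 2)`,
hence `‖F z‖ = O(‖z‖⁻²)` on the closed upper half-plane. So `F` is integrable on `ℝ`, and by
Cauchy's theorem on the rectangle `[-R, R] × [0, R]` its integral over `[-R, R]` equals the
integral over the other three sides, of total length `4R`, on which `‖F‖ = O(R⁻²)`. Letting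
`R → ∞` gives `∫ F = 0`.
-/

open Complex ComplexConjugate MeasureTheory Filter Set Topology Asymptotics

variable {E : Type*} [NormedAddCommGroup E]

theorem integrable_of_norm_le_div_sq {g : ℝ → E} (hg : Continuous g) {C R : ℝ}
    (hdecay : ∀ x : ℝ, R ≤ |x| → ‖g x‖ ≤ C / x ^ 2) : Integrable g := by
  refine hg.locallyIntegrable.integrable_of_isBigO_cocompact
    (g := fun x : ℝ => (1 + x ^ 2)⁻¹) (IsBigO.of_bound (2 * C) ?_)
    (integrable_inv_one_add_sq.integrableAtFilter _)
  filter_upwards [tendsto_norm_cocompact_atTop.eventually_ge_atTop (max R 1)] with x hx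
  rw [Real.norm_eq_abs] at hx
  have hx1 : 1 ≤ x ^ 2 := by nlinarith [sq_abs x, le_of_max_le_right hx]
  have hC : 0 ≤ C := by
    have h := (norm_nonneg _).trans (hdecay x (le_of_max_le_left hx))
    rwa [le_div_iff₀ (by positivity), zero_mul] at h
  calc ‖g x‖ ≤ C / x ^ 2 := hdecay x (le_of_max_le_left hx)
    _ ≤ 2 * C / (1 + x ^ 2) := by
        rw [div_le_div_iff₀ (by positivity) (by positivity)]; nlinarith
    _ = 2 * C * ‖(1 + x ^ 2)⁻¹‖ := by
        rw [norm_inv, Real.norm_of_nonneg (by positivity), div_eq_mul_inv]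

section UpperHalfPlane

variable [NormedSpace ℂ E] {F : ℂ → E}

theorem intervalIntegral_eq_upper_rectangle_sides (hc : ContinuousOn F {z | 0 ≤ z.im})
    (hd : DifferentiableOn ℂ F {z | 0 < z.im}) {R : ℝ} (hR : 0 ≤ R) :
    ∫ x in -R..R, F x = (∫ x in -R..R, F (x + R * I)) - I • (∫ y in 0..R, F (R + y * I))
      + I • ∫ y in 0..R, F (-R + y * I) := by
  have h := integral_boundary_rect_eq_zero_of_continuousOn_of_differentiableOn F (-R) (R + R * I)
    (hc.mono fun z hz => ?_) (hd.mono fun z hz => ?_)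
  · simp only [neg_im, ofReal_im, neg_zero, ofReal_zero, zero_mul, add_zero, neg_re, ofReal_re,
      add_re, mul_re, I_re, mul_zero, I_im, mul_one, sub_self, add_im, mul_im, zero_add,
      ofReal_neg] at h
    rw [sub_eq_zero] at h
    rw [← h]
    abel
  all_goals
    have him := hz.2
    simp only [mem_preimage, neg_im, ofReal_im, add_im, mul_im, ofReal_re, I_im, I_re] at him
    simp_all

theorem norm_intervalIntegral_le_of_upperHalfPlane (hc : ContinuousOn F {z | 0 ≤ z.im})
    (hd : DifferentiableOn ℂ F {z | 0 < z.im}) {C R₀ : ℝ}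
    (hdecay : ∀ z, 0 ≤ z.im → R₀ ≤ ‖z‖ → ‖F z‖ ≤ C / ‖z‖ ^ 2) {R : ℝ} (hR : 0 < R)
    (hR₀ : R₀ ≤ R) :
    ‖∫ x in -R..R, F x‖ ≤ 4 * C / R := by
  have hbound : ∀ z, 0 ≤ z.im → R ≤ ‖z‖ → ‖F z‖ ≤ C / R ^ 2 := by
    intro z hz hRz
    have hFz := hdecay z hz (hR₀.trans hRz)
    have hC : 0 ≤ C := by
      have h := (norm_nonneg _).trans hFz
      rwa [le_div_iff₀ (pow_pos (hR.trans_le hRz) 2), zero_mul] at h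
    exact hFz.trans (by gcongr)
  have htop : ‖∫ x in -R..R, F (x + R * I)‖ ≤ C / R ^ 2 * |R - -R| :=
    intervalIntegral.norm_integral_le_of_norm_le_const fun x _ =>
      hbound _ (by simpa using hR.le) (by simpa [abs_of_pos hR] using abs_im_le_norm (x + R * I))
  have hside : ∀ s : ℝ, |s| = R → ‖∫ y in 0..R, F (s + y * I)‖ ≤ C / R ^ 2 * |R - 0| := by
    intro s hs
    refine intervalIntegral.norm_integral_le_of_norm_le_const fun y hy => ?_
    rw [uIoc_of_le hR.le] at hy
    exact hbound _ (by simpa using hy.1.le) (by simpa [hs] using abs_re_le_norm (s + y * I))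
  have hright := hside R (abs_of_pos hR)
  have hleft := hside (-R) (by rw [abs_neg, abs_of_pos hR])
  push_cast at hleft
  rw [intervalIntegral_eq_upper_rectangle_sides hc hd hR.le]
  calc _ ≤ ‖∫ x in -R..R, F (x + R * I)‖ + ‖∫ y in 0..R, F (R + y * I)‖
        + ‖∫ y in 0..R, F (-R + y * I)‖ := by
          refine (norm_add_le _ _).trans (add_le_add ((norm_sub_le _ _).trans ?_) ?_) <;>
            simp [norm_smul]
    _ ≤ C / R ^ 2 * |R - -R| + C / R ^ 2 * |R - 0| + C / R ^ 2 * |R - 0| := by gcongr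
    _ = 4 * C / R := by
        rw [sub_neg_eq_add, sub_zero, abs_of_pos (by linarith), abs_of_pos hR]
        field_simp
        ring

theorem integral_eq_zero_of_upperHalfPlane [CompleteSpace E]
    (hc : ContinuousOn F {z | 0 ≤ z.im})
    (hd : DifferentiableOn ℂ F {z | 0 < z.im}) {C R₀ : ℝ}
    (hdecay : ∀ z, 0 ≤ z.im → R₀ ≤ ‖z‖ → ‖F z‖ ≤ C / ‖z‖ ^ 2) :
    Integrable (fun x : ℝ => F x) ∧ ∫ x : ℝ, F x = 0 := by
  have hint : Integrable (fun x : ℝ => F x) :=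
    integrable_of_norm_le_div_sq (hc.comp_continuous continuous_ofReal fun x => by simp)
      fun x hx => by simpa using hdecay x (by simp) (by simpa using hx)
  refine ⟨hint, tendsto_nhds_unique
    (intervalIntegral_tendsto_integral hint tendsto_neg_atTop_atBot tendsto_id) ?_⟩
  have hbound : Tendsto (fun R : ℝ => 4 * C / R) atTop (𝓝 0) :=
    tendsto_const_nhds.div_atTop tendsto_id
  refine squeeze_zero_norm' ?_ hbound
  filter_upwards [eventually_gt_atTop 0, eventually_ge_atTop R₀] with R hR hR₀
  exact norm_intervalIntegral_le_of_upperHalfPlane hc hd hdecay hR hR₀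

end UpperHalfPlane

theorem one_sub_mul_norm_le_norm_sub_mul {R : Type*} [SeminormedRing R] {a b c : R} {δ : ℝ}
    (hba : ‖b‖ ≤ ‖a‖) (hc : ‖c‖ ≤ δ) : (1 - δ) * ‖a‖ ≤ ‖a - c * b‖ := by
  have hcb : ‖c * b‖ ≤ δ * ‖a‖ :=
    (norm_mul_le c b).trans (mul_le_mul hc hba (norm_nonneg b) ((norm_nonneg c).trans hc))
  linarith [norm_sub_norm_le a (c * b)]

def conjReflect (f : ℂ → ℂ) (z : ℂ) : ℂ := conj (f (conj z))

theorem Differentiable.conjReflect {f : ℂ → ℂ} (hf : Differentiable ℂ f) :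
    Differentiable ℂ (conjReflect f) := fun z => by
  have h := (hf (conj z)).conj_conj
  rw [Complex.conj_conj] at h
  exact h

noncomputable def integrandI (f w : ℂ → ℂ) (n : ℕ) (z : ℂ) : ℂ :=
  z ^ n * w z / (conjReflect f z * (conjReflect f z - w z * f z))

section Integrand

variable {f w : ℂ → ℂ} {δ : ℝ}

theorem conjReflect_ne_zero (hM1 : ∀ z : ℂ, z.im ≤ 0 → f z ≠ 0) {z : ℂ} (hz : 0 ≤ z.im) :
    conjReflect f z ≠ 0 :=
  (map_ne_zero _).mpr (hM1 _ (by simpa using hz))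

variable (hM1 : ∀ z : ℂ, z.im ≤ 0 → f z ≠ 0)
  (hM2 : ∀ z : ℂ, 0 ≤ z.im → ‖f z‖ ≤ ‖conjReflect f z‖) (hδ : δ < 1)
  (hwb : ∀ z : ℂ, 0 ≤ z.im → ‖w z‖ ≤ δ)
include hM2 hδ hwb

theorem norm_integrandI_le_div_sq (n : ℕ)
    (hM3 : ∀ m : ℕ, ∀ ε : ℝ, 0 < ε → ∃ R : ℝ, 0 < R ∧ ∀ z : ℂ, z.im ≤ 0 →
      R ≤ ‖z‖ → ‖z‖ ^ m ≤ ε * ‖f z‖) :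
    ∃ R : ℝ, ∀ z : ℂ, 0 ≤ z.im → R ≤ ‖z‖ → ‖integrandI f w n z‖ ≤ δ / (1 - δ) / ‖z‖ ^ 2 := by
  obtain ⟨R, -, hR⟩ := hM3 (n + 2) 1 one_pos
  refine ⟨max R 1, fun z hz hzR => ?_⟩
  have hz1 : 1 ≤ ‖z‖ := le_of_max_le_right hzR
  have hgrowth : ‖z‖ ^ (n + 2) ≤ ‖conjReflect f z‖ := by
    simpa [conjReflect] using
      hR (conj z) (by simpa using hz) (by simpa using le_of_max_le_left hzR)
  have hfb1 : 1 ≤ ‖conjReflect f z‖ := (one_le_pow₀ hz1).trans hgrowth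
  have hδ0 : 0 ≤ δ := (norm_nonneg _).trans (hwb z hz)
  calc ‖integrandI f w n z‖
      = ‖z‖ ^ n * ‖w z‖ / (‖conjReflect f z‖ * ‖conjReflect f z - w z * f z‖) := by
        simp only [integrandI, norm_div, norm_mul, norm_pow]
    _ ≤ ‖z‖ ^ n * δ / (‖conjReflect f z‖ * ((1 - δ) * ‖conjReflect f z‖)) := by
        gcongr
        · exact hwb z hz
        · exact one_sub_mul_norm_le_norm_sub_mul (hM2 z hz) (hwb z hz)
    _ = ‖z‖ ^ n * δ / ((1 - δ) * (‖conjReflect f z‖ * ‖conjReflect f z‖)) := by ring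
    _ ≤ ‖z‖ ^ n * δ / ((1 - δ) * ‖z‖ ^ (n + 2)) := by
        gcongr
        exact hgrowth.trans (le_mul_of_one_le_left (by positivity) hfb1)
    _ = δ / (1 - δ) / ‖z‖ ^ 2 := by
        field_simp
        ring

include hM1

theorem integrandI_denom_ne_zero {z : ℂ} (hz : 0 ≤ z.im) :
    conjReflect f z * (conjReflect f z - w z * f z) ≠ 0 := by
  have hne := conjReflect_ne_zero hM1 hz
  refine mul_ne_zero hne fun h => ?_
  have := one_sub_mul_norm_le_norm_sub_mul (hM2 z hz) (hwb z hz)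
  rw [h, norm_zero] at this
  nlinarith [norm_pos_iff.mpr hne]

variable (n : ℕ) (hf : Differentiable ℂ f)
include hf

theorem continuousOn_integrandI (hwc : ContinuousOn w {z : ℂ | 0 ≤ z.im}) :
    ContinuousOn (integrandI f w n) {z : ℂ | 0 ≤ z.im} := by
  have hfb := hf.conjReflect.continuous.continuousOn (s := {z : ℂ | 0 ≤ z.im})
  exact ((continuous_pow n).continuousOn.mul hwc).div
    (hfb.mul (hfb.sub (hwc.mul hf.continuous.continuousOn)))
    fun z hz => integrandI_denom_ne_zero hM1 hM2 hδ hwb hz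

theorem differentiableOn_integrandI (hwh : DifferentiableOn ℂ w {z : ℂ | 0 < z.im}) :
    DifferentiableOn ℂ (integrandI f w n) {z : ℂ | 0 < z.im} := by
  have hfb := hf.conjReflect.differentiableOn (s := {z : ℂ | 0 < z.im})
  exact ((differentiable_pow n).differentiableOn.mul hwh).div
    (hfb.mul (hfb.sub (hwh.mul hf.differentiableOn)))
    fun z hz => integrandI_denom_ne_zero hM1 hM2 hδ hwb hz.le

end Integrand

/-- Vanishing of the integrals `I_n` (equation (2.12)): for `f` entire satisfying (M1),
(M2), (M3), and `w` continuous on the closed upper half-plane, holomorphic on the open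
upper half-plane, with `|w| ≤ δ < 1` there, the integrand
`x^n·w(x)/(f̄(x)·(f̄(x) - w(x)·f(x)))` (with `f̄(x) = conj (f x)` for real `x`) is
integrable on ℝ and its integral vanishes. -/
theorem I_n_eq_zero
    (f : ℂ → ℂ) (hf : Differentiable ℂ f)
    (hM1 : ∀ z : ℂ, z.im ≤ 0 → f z ≠ 0)
    (hM2 : ∀ z : ℂ, 0 ≤ z.im →
      ‖f z‖ ≤ ‖(starRingEnd ℂ) (f ((starRingEnd ℂ) z))‖)
    (hM3 : ∀ m : ℕ, ∀ ε : ℝ, 0 < ε → ∃ R : ℝ, 0 < R ∧ ∀ z : ℂ, z.im ≤ 0 →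
      R ≤ ‖z‖ → ‖z‖ ^ m ≤ ε * ‖f z‖)
    (δ : ℝ) (hδ : δ ∈ Set.Ioo (0 : ℝ) 1)
    (w : ℂ → ℂ)
    (hwc : ContinuousOn w {z : ℂ | 0 ≤ z.im})
    (hwh : DifferentiableOn ℂ w {z : ℂ | 0 < z.im})
    (hwb : ∀ z : ℂ, 0 ≤ z.im → ‖w z‖ ≤ δ)
    (n : ℕ) :
    Integrable (fun x : ℝ => (x : ℂ) ^ n * w (x : ℂ) /
      ((starRingEnd ℂ) (f (x : ℂ)) *
        ((starRingEnd ℂ) (f (x : ℂ)) - w (x : ℂ) * f (x : ℂ)))) ∧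
    ∫ x : ℝ, (x : ℂ) ^ n * w (x : ℂ) /
      ((starRingEnd ℂ) (f (x : ℂ)) *
        ((starRingEnd ℂ) (f (x : ℂ)) - w (x : ℂ) * f (x : ℂ))) = 0 := by
  obtain ⟨R, hdecay⟩ := norm_integrandI_le_div_sq hM2 hδ.2 hwb n hM3
  simpa [integrandI, conjReflect] using integral_eq_zero_of_upperHalfPlane
    (continuousOn_integrandI hM1 hM2 hδ.2 hwb n hf hwc)
    (differentiableOn_integrandI hM1 hM2 hδ.2 hwb n hf hwh) hdecay
end

section
/- Let f be an entire function such that: (M1) f(z) ≠ 0 whenever Im z ≤ 0; (M3) for every m ∈ ℕ, z^m/f(z) → 0 as |z| → ∞ uniformly on {z : Im z ≤ 0}. Define, for z with Im z < 0, g(z) = −(f(z)/π)·∫_ℝ 1/(f(x)·conj(f(x))·(x − z)) dx. Then there exists an entire function G such that G(z) = g(z) for all z with Im z < 0. -/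
/-!
For real `x` write `(f z - f x) / (z - x) = dslope f x z`. When `im z < 0` the integrand splits as
`dslope f x z / |f x|² = -f z / (|f x|² (x - z)) + 1 / (conj (f x) (x - z))`, and the last term
integrates to zero by Cauchy's theorem in the upper half-plane, where `conj ∘ f ∘ conj` is
holomorphic and zero-free by (M1) and `1 / (conj (f (conj w)) (w - z)) = O(|w|⁻²)` by (M3).
Hence `g z = π⁻¹ ∫ dslope f x z / |f x|² dx` on the lower half-plane, and the right-hand side is
entire: each `dslope f x` is entire, and for `z` in a bounded set the integrand is dominated by
`(M + |f x|) / |f x|²`, which is integrable since `|f x| ≥ 1 + x²` for large `|x|`; Cauchy's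
estimates turn this into a domination of the `z`-derivatives, so one may differentiate under the
integral sign.
-/

open Complex MeasureTheory Filter Topology Metric ComplexConjugate

section

variable {α E : Type*} [MeasurableSpace α] {μ : Measure α} [NormedAddCommGroup E]
  [NormedSpace ℂ E]

theorem aestronglyMeasurable_deriv_of_differentiable {F : ℂ → α → E}
    (hF : ∀ x, Differentiable ℂ (F · x)) (hF_meas : ∀ z, AEStronglyMeasurable (F z) μ)
    (z : ℂ) : AEStronglyMeasurable (fun x => deriv (F · x) z) μ := by
  have h_seq : Tendsto (fun n : ℕ => (n : ℂ)⁻¹) atTop (𝓝[≠] 0) :=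
    tendsto_nhdsWithin_iff.mpr ⟨tendsto_inv_atTop_nhds_zero_nat,
      (eventually_ne_atTop 0).mono fun n hn => inv_ne_zero (Nat.cast_ne_zero.mpr hn)⟩
  refine aestronglyMeasurable_of_tendsto_ae atTop
    (f := fun (n : ℕ) x => ((n : ℂ)⁻¹)⁻¹ • (F (z + (n : ℂ)⁻¹) x - F z x))
    (fun n => ((hF_meas _).sub (hF_meas z)).const_smul _) (ae_of_all _ fun x => ?_)
  exact (hasDerivAt_iff_tendsto_slope_zero.mp (hF x z).hasDerivAt).comp h_seq

theorem differentiable_integral_of_dominated {F : ℂ → α → E}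
    (hF : ∀ x, Differentiable ℂ (F · x)) (hF_meas : ∀ z, AEStronglyMeasurable (F z) μ)
    (hF_bound : ∀ r, ∃ B : α → ℝ, Integrable B μ ∧ ∀ z x, ‖z‖ ≤ r → ‖F z x‖ ≤ B x) :
    Differentiable ℂ fun z => ∫ x, F z x ∂μ := by
  intro z₀
  obtain ⟨B, hB_int, hB⟩ := hF_bound (‖z₀‖ + 2)
  have h_sphere : ∀ z ∈ ball z₀ 1, ∀ w ∈ sphere z 1, ‖w‖ ≤ ‖z₀‖ + 2 := by
    intro z hz w hw
    rw [mem_ball_iff_norm] at hz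
    rw [mem_sphere_iff_norm] at hw
    calc ‖w‖ ≤ ‖w - z‖ + ‖z - z₀‖ + ‖z₀‖ := by
          simpa using norm_add₃_le (a := w - z) (b := z - z₀) (c := z₀)
      _ ≤ ‖z₀‖ + 2 := by linarith
  have h_deriv_le : ∀ x, ∀ z ∈ ball z₀ 1, ‖deriv (F · x) z‖ ≤ B x := fun x z hz => by
    simpa using norm_deriv_le_of_forall_mem_sphere_norm_le one_pos (hF x).diffContOnCl
      fun w hw => hB w x (h_sphere z hz w hw)
  refine (hasDerivAt_integral_of_dominated_loc_of_deriv_le (ball_mem_nhds z₀ one_pos)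
    (Eventually.of_forall hF_meas)
    (hB_int.mono' (hF_meas z₀) (ae_of_all _ fun x => hB z₀ x (by linarith)))
    (aestronglyMeasurable_deriv_of_differentiable hF hF_meas z₀)
    (ae_of_all _ (h_deriv_le)) hB_int
    (ae_of_all _ fun x z _ => (hF x z).hasDerivAt)).2.differentiableAt

theorem norm_intervalIntegral_le_of_differentiableAt_upperHalfPlane {h : ℂ → E}
    (hd : ∀ w : ℂ, 0 ≤ w.im → DifferentiableAt ℂ h w) {R C : ℝ} (hR : 0 < R)
    (hbound : ∀ w : ℂ, 0 ≤ w.im → R ≤ ‖w‖ → ‖h w‖ ≤ C) :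
    ‖∫ x in -R..R, h x‖ ≤ 4 * R * C := by
  have hrect := integral_boundary_rect_eq_zero_of_differentiableOn h (-R : ℝ) (R + R * I)
    fun w hw => by
      have him : w.im ∈ Set.uIcc 0 R := by simpa using hw.2
      exact (hd w (Set.uIcc_of_le hR.le ▸ him).1).differentiableWithinAt
  simp only [ofReal_re, ofReal_im, add_re, add_im, mul_re, mul_im, I_re, I_im, ofReal_zero,
    zero_mul, add_zero, mul_zero, mul_one, sub_zero, zero_add] at hrect
  have hside : ∀ w : ℂ, 0 ≤ w.im → (R ≤ |w.re| ∨ R ≤ w.im) → ‖h w‖ ≤ C := fun w him hw =>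
    hbound w him <| hw.elim (fun hre => hre.trans (abs_re_le_norm w))
      fun hre => hre.trans ((le_abs_self _).trans (abs_im_le_norm w))
  have htop : ‖∫ x in -R..R, h (x + R * I)‖ ≤ C * |R - -R| :=
    intervalIntegral.norm_integral_le_of_norm_le_const fun x _ =>
      hside _ (by simp [hR.le]) (by simp)
  have hright : ‖∫ y in (0 : ℝ)..R, h (R + y * I)‖ ≤ C * |R - 0| :=
    intervalIntegral.norm_integral_le_of_norm_le_const fun y hy => by
      rw [Set.uIoc_of_le hR.le] at hy
      exact hside _ (by simp [hy.1.le]) (by simp [abs_of_pos hR])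
  have hleft : ‖∫ y in (0 : ℝ)..R, h ((-R : ℝ) + y * I)‖ ≤ C * |R - 0| :=
    intervalIntegral.norm_integral_le_of_norm_le_const fun y hy => by
      rw [Set.uIoc_of_le hR.le] at hy
      exact hside _ (by simp [hy.1.le]) (by simp [abs_of_pos hR])
  have hbottom : ∫ x in -R..R, h x = (∫ x in -R..R, h (x + R * I))
      - I • (∫ y in (0 : ℝ)..R, h (R + y * I))
      + I • ∫ y in (0 : ℝ)..R, h ((-R : ℝ) + y * I) := by
    rw [← sub_eq_zero, ← hrect]
    push_cast
    abel
  rw [hbottom]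
  calc _ ≤ ‖∫ x in -R..R, h (x + R * I)‖ + ‖I • ∫ y in (0 : ℝ)..R, h (R + y * I)‖
        + ‖I • ∫ y in (0 : ℝ)..R, h ((-R : ℝ) + y * I)‖ :=
          (norm_add_le _ _).trans (add_le_add_left (norm_sub_le _ _) _)
    _ ≤ C * |R - -R| + C * |R - 0| + C * |R - 0| := by
        simp only [norm_smul, norm_I, one_mul]
        gcongr
    _ = 4 * R * C := by
        rw [sub_neg_eq_add, sub_zero, abs_of_pos (by linarith), abs_of_pos hR]
        ring

theorem integral_eq_zero_of_differentiableAt_upperHalfPlane {h : ℂ → E}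
    (hd : ∀ w : ℂ, 0 ≤ w.im → DifferentiableAt ℂ h w)
    (hint : Integrable fun x : ℝ => h x) {C R₀ : ℝ}
    (hdecay : ∀ w : ℂ, 0 ≤ w.im → R₀ ≤ ‖w‖ → ‖h w‖ ≤ C / ‖w‖ ^ 2) :
    ∫ x : ℝ, h x = 0 := by
  have hsegment : ∀ R, max R₀ 1 ≤ R → ‖∫ x in -R..R, h x‖ ≤ 4 * |C| / R := by
    intro R hR
    have hR₀ : R₀ ≤ R := (le_max_left _ _).trans hR
    have hR1 : 0 < R := zero_lt_one.trans_le ((le_max_right _ _).trans hR)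
    calc ‖∫ x in -R..R, h x‖ ≤ 4 * R * (|C| / R ^ 2) :=
          norm_intervalIntegral_le_of_differentiableAt_upperHalfPlane hd hR1
            fun w him hw => (hdecay w him (hR₀.trans hw)).trans <|
              (div_le_div_of_nonneg_right (le_abs_self C) (by positivity)).trans
                (div_le_div_of_nonneg_left (abs_nonneg C) (by positivity) (by gcongr))
      _ = 4 * |C| / R := by field_simp
  refine tendsto_nhds_unique
    (intervalIntegral_tendsto_integral hint tendsto_neg_atTop_atBot tendsto_id)
    (squeeze_zero_norm' ?_ ((tendsto_const_nhds (x := 4 * |C|)).div_atTop tendsto_id))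
  filter_upwards [eventually_ge_atTop (max R₀ 1)] with R hR using hsegment R hR

theorem Differentiable.exists_norm_dslope_le {f : ℂ → E} (hf : Differentiable ℂ f) (r : ℝ) :
    ∃ M, ∀ a w : ℂ, ‖w‖ ≤ r → ‖dslope f a w‖ ≤ M + ‖f a‖ := by
  obtain ⟨M, hM⟩ := (isCompact_closedBall (0 : ℂ) (3 * r + 3)).exists_bound_of_continuousOn
    hf.continuous.continuousOn
  refine ⟨M, fun a w hw => ?_⟩
  have hr : 0 ≤ r := (norm_nonneg w).trans hw
  have hM0 : 0 ≤ M := (norm_nonneg _).trans (hM 0 (by simp; linarith))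
  rcases le_or_gt ‖a‖ (r + 1) with ha | ha
  · have hmaps : Set.MapsTo f (ball a (2 * r + 2)) (closedBall (f a) (2 * M)) := fun z hz => by
      rw [mem_ball_iff_norm] at hz
      have hz' : ‖z‖ ≤ 3 * r + 3 := by
        linarith [norm_le_norm_add_norm_sub' z a, norm_sub_rev z a]
      rw [mem_closedBall_iff_norm]
      linarith [norm_sub_le (f z) (f a), hM z (by simpa using hz'),
        hM a (by simp; linarith)]
    have hw' : w ∈ ball a (2 * r + 2) := by
      rw [mem_ball_iff_norm]; linarith [norm_sub_le w a]
    calc ‖dslope f a w‖ ≤ 2 * M / (2 * r + 2) :=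
          norm_dslope_le_div_of_mapsTo_ball hf.differentiableOn hmaps hw'
      _ ≤ 2 * M / 2 := by gcongr; linarith
      _ ≤ M + ‖f a‖ := by linarith [norm_nonneg (f a)]
  · have hwa : 1 ≤ ‖w - a‖ := by linarith [norm_sub_norm_le a w, norm_sub_rev a w]
    rw [dslope_of_ne f (by rintro rfl; linarith), slope_def_module, norm_smul, norm_inv]
    calc ‖w - a‖⁻¹ * ‖f w - f a‖ ≤ 1 * ‖f w - f a‖ := by
          gcongr; exact inv_le_one_of_one_le₀ hwa
      _ ≤ M + ‖f a‖ := by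
          rw [one_mul]; linarith [norm_sub_le (f w) (f a), hM w (by simp; linarith)]

end

theorem dslope_comm {𝕜 E : Type*} [NontriviallyNormedField 𝕜] [NormedAddCommGroup E]
    [NormedSpace 𝕜 E] (f : 𝕜 → E) (a b : 𝕜) : dslope f a b = dslope f b a := by
  rcases eq_or_ne a b with rfl | hab
  · rfl
  · rw [dslope_of_ne f hab.symm, dslope_of_ne f hab, slope_comm]

theorem integrable_of_norm_le_mul_inv_one_add_sq {E : Type*} [NormedAddCommGroup E] {u : ℝ → E}
    (hu : Continuous u) {A C : ℝ} (h : ∀ x, A ≤ |x| → ‖u x‖ ≤ C * (1 + x ^ 2)⁻¹) :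
    Integrable u := by
  refine hu.locallyIntegrable.integrable_of_isBigO_cocompact (g := fun x : ℝ => (1 + x ^ 2)⁻¹)
    (Asymptotics.IsBigO.of_bound C ?_) (integrable_inv_one_add_sq.integrableAtFilter _)
  filter_upwards [tendsto_norm_cocompact_atTop.eventually (eventually_ge_atTop A)] with x hx
  rw [Real.norm_of_nonneg (by positivity)]
  exact h x hx

theorem integrable_inv_norm_pow {f : ℂ → ℂ} (hf : Continuous f)
    (hM1 : ∀ z : ℂ, z.im ≤ 0 → f z ≠ 0) {R : ℝ}
    (hgrowth : ∀ w : ℂ, w.im ≤ 0 → R ≤ ‖w‖ → 1 + ‖w‖ ^ 2 ≤ ‖f w‖) {n : ℕ} (hn : n ≠ 0) :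
    Integrable fun x : ℝ => ‖f x‖⁻¹ ^ n := by
  have hcont : Continuous fun x : ℝ => ‖f x‖⁻¹ ^ n :=
    ((hf.comp continuous_ofReal).norm.inv₀ fun x => norm_ne_zero_iff.mpr (hM1 x (by simp))).pow n
  refine integrable_of_norm_le_mul_inv_one_add_sq hcont (A := R) (C := 1) fun x hx => ?_
  have hfx : 1 + x ^ 2 ≤ ‖f x‖ := by
    simpa [norm_real, sq_abs] using hgrowth x (by simp) (by simpa using hx)
  have hinv : ‖f x‖⁻¹ ≤ (1 + x ^ 2)⁻¹ := inv_anti₀ (by positivity) hfx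
  rw [Real.norm_of_nonneg (by positivity), one_mul]
  have hinv_le_one : ‖f x‖⁻¹ ≤ 1 := hinv.trans (inv_le_one_of_one_le₀ (by nlinarith))
  exact (pow_le_of_le_one (by positivity) hinv_le_one hn).trans hinv

theorem neg_im_le_norm_sub {w z : ℂ} (hw : 0 ≤ w.im) : -z.im ≤ ‖w - z‖ :=
  calc -z.im ≤ (w - z).im := by rw [sub_im]; linarith
    _ ≤ ‖w - z‖ := (le_abs_self _).trans (abs_im_le_norm _)

theorem differentiable_integral_dslope_div {f : ℂ → ℂ} (hf : Differentiable ℂ f)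
    (hM1 : ∀ z : ℂ, z.im ≤ 0 → f z ≠ 0) {R : ℝ}
    (hgrowth : ∀ w : ℂ, w.im ≤ 0 → R ≤ ‖w‖ → 1 + ‖w‖ ^ 2 ≤ ‖f w‖) :
    Differentiable ℂ fun z => ∫ x : ℝ, dslope f x z / (f x * conj (f x)) := by
  have hfx : ∀ x : ℝ, f x ≠ 0 := fun x => hM1 x (by simp)
  have hdslope : ∀ a, Differentiable ℂ (dslope f a) := fun a =>
    differentiableOn_univ.mp ((differentiableOn_dslope univ_mem).mpr hf.differentiableOn)
  refine differentiable_integral_of_dominated (fun x => (hdslope x).div_const _)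
    (fun z => Continuous.aestronglyMeasurable ?_) fun r => ?_
  · simp_rw [dslope_comm f _ z]
    exact ((hdslope z).continuous.comp continuous_ofReal).div
      ((hf.continuous.comp continuous_ofReal).mul
        (continuous_conj.comp (hf.continuous.comp continuous_ofReal)))
      fun x => mul_ne_zero (hfx x) ((map_ne_zero _).mpr (hfx x))
  obtain ⟨M, hM⟩ := hf.exists_norm_dslope_le r
  refine ⟨fun x => M * ‖f x‖⁻¹ ^ 2 + ‖f x‖⁻¹,
    ((integrable_inv_norm_pow hf.continuous hM1 hgrowth two_ne_zero).const_mul M).add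
      (by simpa using integrable_inv_norm_pow hf.continuous hM1 hgrowth one_ne_zero),
    fun z x hz => ?_⟩
  have hfx' : ‖f x‖ ≠ 0 := norm_ne_zero_iff.mpr (hfx x)
  calc ‖dslope f x z / (f x * conj (f x))‖ = ‖dslope f x z‖ / (‖f x‖ * ‖f x‖) := by
        rw [norm_div, norm_mul, RCLike.norm_conj]
    _ ≤ (M + ‖f x‖) / (‖f x‖ * ‖f x‖) := by gcongr; exact hM x z hz
    _ = M * ‖f x‖⁻¹ ^ 2 + ‖f x‖⁻¹ := by field_simp

theorem integral_inv_conj_mul_sub_eq_zero {f : ℂ → ℂ} (hf : Differentiable ℂ f)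
    (hM1 : ∀ z : ℂ, z.im ≤ 0 → f z ≠ 0) {R : ℝ}
    (hgrowth : ∀ w : ℂ, w.im ≤ 0 → R ≤ ‖w‖ → 1 + ‖w‖ ^ 2 ≤ ‖f w‖) {z : ℂ} (hz : z.im < 0)
    (hint : Integrable fun x : ℝ => (conj (f x) * (x - z))⁻¹) :
    ∫ x : ℝ, (conj (f x) * (x - z))⁻¹ = 0 := by
  have hd : ∀ w : ℂ, 0 ≤ w.im →
      DifferentiableAt ℂ (fun w => (conj (f (conj w)) * (w - z))⁻¹) w := by
    intro w hw
    have hfw := (hf (conj w)).conj_conj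
    rw [conj_conj] at hfw
    refine (hfw.mul (differentiableAt_id.sub_const z)).inv (mul_ne_zero ?_ ?_)
    · exact (map_ne_zero _).mpr (hM1 _ (by rw [conj_im]; linarith))
    · exact norm_pos_iff.mp ((neg_pos.mpr hz).trans_le (neg_im_le_norm_sub hw))
  have hdecay : ∀ w : ℂ, 0 ≤ w.im → max R 1 ≤ ‖w‖ →
      ‖(conj (f (conj w)) * (w - z))⁻¹‖ ≤ (-z.im)⁻¹ / ‖w‖ ^ 2 := by
    intro w hw hRw
    have hw1 : 1 ≤ ‖w‖ := (le_max_right _ _).trans hRw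
    have hfw : ‖w‖ ^ 2 ≤ ‖f (conj w)‖ := by
      have := hgrowth (conj w) (by rw [conj_im]; linarith)
        (by rw [RCLike.norm_conj]; exact (le_max_left _ _).trans hRw)
      rw [RCLike.norm_conj] at this
      linarith
    rw [norm_inv, norm_mul, RCLike.norm_conj, div_eq_mul_inv, ← mul_inv]
    exact inv_anti₀ (mul_pos (neg_pos.mpr hz) (by positivity)) <| (mul_comm _ _).trans_le <|
      mul_le_mul hfw (neg_im_le_norm_sub hw) (neg_pos.mpr hz).le (norm_nonneg _)
  simpa using integral_eq_zero_of_differentiableAt_upperHalfPlane hd (by simpa using hint) hdecay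

theorem integral_dslope_div_eq {f : ℂ → ℂ} (hf : Differentiable ℂ f)
    (hM1 : ∀ z : ℂ, z.im ≤ 0 → f z ≠ 0) {R : ℝ}
    (hgrowth : ∀ w : ℂ, w.im ≤ 0 → R ≤ ‖w‖ → 1 + ‖w‖ ^ 2 ≤ ‖f w‖) {z : ℂ} (hz : z.im < 0) :
    ∫ x : ℝ, dslope f x z / (f x * conj (f x)) =
      -f z * ∫ x : ℝ, 1 / (f x * conj (f x) * (x - z)) := by
  have hfx : ∀ x : ℝ, f x ≠ 0 := fun x => hM1 x (by simp)
  have hdist : ∀ x : ℝ, -z.im ≤ ‖(x : ℂ) - z‖ := fun x => neg_im_le_norm_sub (by simp)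
  have hsub : ∀ x : ℝ, (x : ℂ) - z ≠ 0 := fun x =>
    norm_pos_iff.mp ((neg_pos.mpr hz).trans_le (hdist x))
  have hcont_f : Continuous fun x : ℝ => f x := hf.continuous.comp continuous_ofReal
  have hcont_sub : Continuous fun x : ℝ => (x : ℂ) - z := continuous_ofReal.sub continuous_const
  have hu : Integrable fun x : ℝ => 1 / (f x * conj (f x) * (x - z)) := by
    refine ((integrable_inv_norm_pow hf.continuous hM1 hgrowth two_ne_zero).const_mul
      (-z.im)⁻¹).mono' ?_ (ae_of_all _ fun x => ?_)
    · refine (continuous_const.div ((hcont_f.mul (continuous_conj.comp hcont_f)).mul hcont_sub)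
        fun x => ?_).aestronglyMeasurable
      exact mul_ne_zero (mul_ne_zero (hfx x) ((map_ne_zero _).mpr (hfx x))) (hsub x)
    · rw [one_div, norm_inv, norm_mul, norm_mul, RCLike.norm_conj, mul_inv, mul_comm, ← sq,
        inv_pow]
      exact mul_le_mul_of_nonneg_right (inv_anti₀ (neg_pos.mpr hz) (hdist x)) (by positivity)
  have hv : Integrable fun x : ℝ => (conj (f x) * (x - z))⁻¹ := by
    have hweight : Integrable fun x : ℝ => (-z.im)⁻¹ * ‖f x‖⁻¹ := by
      simpa using
        (integrable_inv_norm_pow hf.continuous hM1 hgrowth one_ne_zero).const_mul (-z.im)⁻¹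
    refine hweight.mono' ?_ (ae_of_all _ fun x => ?_)
    · exact ((continuous_conj.comp hcont_f).mul hcont_sub).inv₀
        (fun x => mul_ne_zero ((map_ne_zero _).mpr (hfx x)) (hsub x)) |>.aestronglyMeasurable
    · rw [norm_inv, norm_mul, RCLike.norm_conj, mul_inv, mul_comm]
      exact mul_le_mul_of_nonneg_right (inv_anti₀ (neg_pos.mpr hz) (hdist x)) (by positivity)
  have hsplit : ∀ x : ℝ, dslope f x z / (f x * conj (f x)) =
      -f z * (1 / (f x * conj (f x) * (x - z))) + (conj (f x) * (x - z))⁻¹ := by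
    intro x
    have hfx' := hfx x
    have hsub' := hsub x
    have hconj : conj (f x) ≠ 0 := (map_ne_zero _).mpr (hfx x)
    have hzx : z - x ≠ 0 := by rw [← neg_sub]; exact neg_ne_zero.mpr (hsub x)
    rw [dslope_of_ne f (sub_ne_zero.mp hzx), slope_def_field]
    field_simp
    ring
  simp_rw [hsplit]
  rw [integral_add (hu.const_mul _) hv, integral_const_mul,
    integral_inv_conj_mul_sub_eq_zero hf hM1 hgrowth hz hv, add_zero]

/-- Theorem 2(i) of the paper: for `f` entire satisfying (M1) and (M3), the function
`g(z) = -(f(z)/π)·∫_ℝ dx/(f(x)·conj(f(x))·(x - z))`, defined for `Im z < 0`, extends to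
an entire function. -/
theorem g_extends_to_entire
    (f : ℂ → ℂ) (hf : Differentiable ℂ f)
    (hM1 : ∀ z : ℂ, z.im ≤ 0 → f z ≠ 0)
    (hM3 : ∀ m : ℕ, ∀ ε : ℝ, 0 < ε → ∃ R : ℝ, 0 < R ∧ ∀ z : ℂ, z.im ≤ 0 →
      R ≤ ‖z‖ → ‖z‖ ^ m ≤ ε * ‖f z‖) :
    ∃ G : ℂ → ℂ, Differentiable ℂ G ∧ ∀ z : ℂ, z.im < 0 →
      G z = -(f z / (Real.pi : ℂ)) *
        ∫ x : ℝ, 1 / (f (x : ℂ) * (starRingEnd ℂ) (f (x : ℂ)) * ((x : ℂ) - z)) := by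
  obtain ⟨R, -, hR⟩ := hM3 2 (1 / 2) (by norm_num)
  have hgrowth : ∀ w : ℂ, w.im ≤ 0 → max R 1 ≤ ‖w‖ → 1 + ‖w‖ ^ 2 ≤ ‖f w‖ := by
    intro w hw hRw
    have h1 : 1 ≤ ‖w‖ := (le_max_right _ _).trans hRw
    nlinarith [hR w hw ((le_max_left _ _).trans hRw)]
  refine ⟨fun z => (Real.pi : ℂ)⁻¹ * ∫ x : ℝ, dslope f x z / (f x * conj (f x)),
    (differentiable_integral_dslope_div hf hM1 hgrowth).const_mul _, fun z hz => ?_⟩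
  simp only [integral_dslope_div_eq hf hM1 hgrowth hz]
  ring
end

section
/- Let K > 0 and K' > 0 be real numbers and define the entire function f(z) = Σ_{m≥0} (−1)^m·((K − i·K')²·z/4)^m/(2m)! (i.e., f(z) = cos((K − i·K')·√z/2)). Then for every n ∈ ℕ, z^n/f(z) → 0 as |z| → ∞ uniformly on the closed lower half-plane: for every ε > 0 there exists R > 0 such that for all z with Im z ≤ 0 and |z| ≥ R one has f(z) ≠ 0 and |z|^n ≤ ε·|f(z)|. -/
open Complex Filter Asymptotics

/-! Write `z = s²`; the series is then `cos w` with `w = (K - iK') s / 2`. For `Im z ≤ 0` the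
root `s` has `Re s · Im s ≤ 0`, so the two terms of `Im w = (K Im s - K' Re s) / 2` have the same
sign and `|Im w| ≥ min K K' / 2 · √|z|`. As `|cos w| ≥ |sinh (Im w)|`, the function is at least
`sinh (min K K' / 2 · √|z|)`, which beats every power of `|z|`. -/

theorem Complex.abs_sinh_im_le_norm_cos (w : ℂ) : |Real.sinh w.im| ≤ ‖cos w‖ := by
  have hcos : cos w = (Real.cos w.re * Real.cosh w.im : ℝ) +
      (-(Real.sin w.re * Real.sinh w.im) : ℝ) * I := by
    rw [cos_eq]; push_cast; ring
  have hsq : ‖cos w‖ ^ 2 = Real.cos w.re ^ 2 + Real.sinh w.im ^ 2 := by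
    rw [hcos, Complex.sq_norm, normSq_add_mul_I]
    linear_combination Real.cos w.re ^ 2 * Real.cosh_sq_sub_sinh_sq w.im +
      Real.sinh w.im ^ 2 * Real.sin_sq_add_cos_sq w.re
  exact abs_le_of_sq_le_sq (hsq ▸ le_add_of_nonneg_left (sq_nonneg _)) (norm_nonneg _)

theorem Complex.min_re_neg_im_mul_norm_le_abs_im_mul {a s : ℂ} (ha_re : 0 ≤ a.re)
    (ha_im : a.im ≤ 0) (hs : s.re * s.im ≤ 0) :
    min a.re (-a.im) * ‖s‖ ≤ |(a * s).im| := by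
  have hm_re := min_le_left a.re (-a.im)
  have hm_im := min_le_right a.re (-a.im)
  have hm : 0 ≤ min a.re (-a.im) := le_min ha_re (by linarith)
  calc min a.re (-a.im) * ‖s‖ ≤ min a.re (-a.im) * (|s.re| + |s.im|) :=
        mul_le_mul_of_nonneg_left (norm_le_abs_re_add_abs_im s) hm
    _ ≤ |(a * s).im| := by
      rw [mul_im]
      rcases mul_nonpos_iff.mp hs with ⟨hre, him⟩ | ⟨hre, him⟩
      · rw [abs_of_nonneg hre, abs_of_nonpos him, abs_of_nonpos (by nlinarith)]
        nlinarith
      · rw [abs_of_nonpos hre, abs_of_nonneg him, abs_of_nonneg (by nlinarith)]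
        nlinarith

theorem Real.isBigO_exp_sinh_atTop : Real.exp =O[atTop] Real.sinh := by
  refine IsBigO.of_bound 4 ?_
  filter_upwards [eventually_ge_atTop 1] with x hx
  have h2 : 2 ≤ Real.exp x := by linarith [Real.add_one_le_exp x]
  have hneg : Real.exp (-x) ≤ 1 := Real.exp_le_one_iff.mpr (by linarith)
  rw [Real.norm_of_nonneg (Real.exp_pos x).le,
    Real.norm_of_nonneg (Real.sinh_nonneg_iff.mpr (by linarith)), Real.sinh_eq]
  linarith

theorem isLittleO_pow_sinh_mul_sqrt_atTop (n : ℕ) {c : ℝ} (hc : 0 < c) :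
    (fun r : ℝ => r ^ n) =o[atTop] fun r => Real.sinh (c * √r) := by
  have h := ((isLittleO_pow_exp_pos_mul_atTop (2 * n) hc).trans_isBigO
    (Real.isBigO_exp_sinh_atTop.comp_tendsto (tendsto_id.const_mul_atTop hc))).comp_tendsto
      Real.tendsto_sqrt_atTop
  refine h.congr' ?_ EventuallyEq.rfl
  filter_upwards [eventually_ge_atTop 0] with r hr
  simp [pow_mul, Real.sq_sqrt hr]

theorem tsum_neg_one_pow_mul_pow_div_factorial_eq_cos {w u : ℂ} (h : w ^ 2 = u) :
    ∑' m : ℕ, (-1) ^ m * u ^ m / ((2 * m).factorial : ℂ) = cos w := by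
  rw [cos_eq_tsum, ← h]
  simp only [pow_mul]

/-- Section 3 of the paper: the function `f(z) = cos((K - iK')√z/2)`, defined by the
everywhere-convergent power series `∑ (-1)^m ((K - iK')² z/4)^m/(2m)!`, grows faster than
any power of `|z|` uniformly on the closed lower half-plane: for every `n` and `ε > 0`
there is `R > 0` such that whenever `Im z ≤ 0` and `|z| ≥ R`, `f(z) ≠ 0` and
`|z|^n ≤ ε·|f(z)|`. -/
theorem cos_sqrt_superpolynomial_growth (K K' : ℝ) (hK : 0 < K) (hK' : 0 < K')
    (n : ℕ) (ε : ℝ) (hε : 0 < ε) :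
    ∃ R : ℝ, 0 < R ∧ ∀ z : ℂ, z.im ≤ 0 → R ≤ ‖z‖ →
      (∑' m : ℕ, (-1) ^ m * (((K : ℂ) - Complex.I * (K' : ℂ)) ^ 2 * z / 4) ^ m /
        ((2 * m).factorial : ℂ)) ≠ 0 ∧
      ‖z‖ ^ n ≤ ε * ‖(∑' m : ℕ,
        (-1) ^ m * (((K : ℂ) - Complex.I * (K' : ℂ)) ^ 2 * z / 4) ^ m /
          ((2 * m).factorial : ℂ))‖ := by
  set a : ℂ := ((K : ℂ) - I * K') / 2
  set c : ℝ := min (K / 2) (K' / 2)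
  have hc : 0 < c := lt_min (by positivity) (by positivity)
  obtain ⟨R₀, hR₀⟩ := eventually_atTop.mp
    (((isLittleO_pow_sinh_mul_sqrt_atTop n hc).bound hε).and (eventually_gt_atTop 0))
  refine ⟨max R₀ 1, by positivity, fun z hz hRz => ?_⟩
  obtain ⟨hbound, hz₀⟩ := hR₀ ‖z‖ (le_of_max_le_left hRz)
  obtain ⟨s, hs⟩ := IsAlgClosed.exists_pow_nat_eq z two_pos
  rw [tsum_neg_one_pow_mul_pow_div_factorial_eq_cos (w := a * s) (by rw [mul_pow, hs]; ring)]
  have hs_norm : ‖s‖ = √‖z‖ := by rw [← hs, norm_pow, Real.sqrt_sq (norm_nonneg _)]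
  have hs_quadrant : s.re * s.im ≤ 0 := by
    have := congrArg im hs
    simp only [pow_two, mul_im] at this
    linarith
  have ha_re : a.re = K / 2 := by simp [a]
  have ha_im : a.im = -(K' / 2) := by simp [a]; ring
  have him : c * √‖z‖ ≤ |(a * s).im| := by
    have := Complex.min_re_neg_im_mul_norm_le_abs_im_mul (a := a) (by rw [ha_re]; positivity)
      (by rw [ha_im]; linarith) hs_quadrant
    rwa [ha_re, ha_im, neg_neg, hs_norm] at this
  have hsinh : 0 < Real.sinh (c * √‖z‖) := Real.sinh_pos_iff.mpr (by positivity)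
  have hcos : Real.sinh (c * √‖z‖) ≤ ‖cos (a * s)‖ := calc
    Real.sinh (c * √‖z‖) ≤ Real.sinh |(a * s).im| := Real.sinh_le_sinh.mpr him
    _ = |Real.sinh (a * s).im| := (Real.abs_sinh _).symm
    _ ≤ ‖cos (a * s)‖ := abs_sinh_im_le_norm_cos _
  refine ⟨norm_pos_iff.mp (hsinh.trans_le hcos), ?_⟩
  rw [Real.norm_of_nonneg (by positivity), Real.norm_of_nonneg hsinh.le] at hbound
  exact hbound.trans (mul_le_mul_of_nonneg_left hcos hε.le)
end
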